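/- arXiv:1009.0236 — 6 statements merged into one kernel-verified Lean document; each statement's English description precedes it below -/
import Mathlib

section
/- Let Si denote the sine integral, Si(z) = ∫₀^z (sin t)/t dt, and let arcsin denote the real inverse sine function. For every natural number n, ∫₀¹ x^{2n+1} / arcsin(x) dx = (1/2^{2n+1}) · Σ_{k=0}^n C(2n+1, k) · ((2n-2k+2)/(2n-k+2)) · Si(π(n+1-k)) · (-1)^{k+n}, where C(n,k) denotes the binomial coefficient. -/
/-!
Substituting `x = sin θ` turns the integral into `∫₀^{π/2} sin^{2n+1} θ cos θ / θ dθ`. The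
numerator is a sine polynomial `∑ₖ aₖ sin (2 (n + 1 - k) θ)`, and each `sin (m θ) / θ` integrates
to `Si (m π / 2)`. The coefficients come from `(u - v)^{2n+1} (u + v)` with `u = e^{iθ}`,
`v = e^{-iθ}`, expanded through the Euler operator `x ∂ₓ - y ∂ᵧ` applied to `(x + y)^{2n+2}`; they
are antisymmetric under `k ↦ 2n + 2 - k`, which halves the sum, and
`C(2n+1, k) (2n - 2k + 2) / (2n - k + 2) = C(2n+2, k) (n + 1 - k) / (n + 1)`.
-/

open Real

/-- The sine integral `Si(z) = ∫₀^z (sin t)/t dt`. -/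
noncomputable def Si (z : ℝ) : ℝ := ∫ t in (0:ℝ)..z, Real.sin t / t

section Expansion

open Finset

theorem add_pow_mul_sub_eq_sum {R : Type*} [CommRing R] (N : ℕ) (x y : R) :
    ((N : R) + 1) * ((x + y) ^ N * (x - y)) =
      ∑ m ∈ range (N + 2),
        (2 * (m : R) - (N + 1)) * (N + 1).choose m * x ^ m * y ^ (N + 1 - m) := by
  have hx : ((N : R) + 1) * (x * (x + y) ^ N) =
      ∑ m ∈ range (N + 2), (m : R) * (N + 1).choose m * x ^ m * y ^ (N + 1 - m) := by
    rw [sum_range_succ', add_pow, mul_sum, mul_sum]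
    simp only [Nat.cast_zero, zero_mul, add_zero]
    refine sum_congr rfl fun m _ => ?_
    have h := congrArg (Nat.cast : ℕ → R) (Nat.add_one_mul_choose_eq N m)
    push_cast at h
    rw [Nat.add_sub_add_right]
    push_cast
    linear_combination (x ^ (m + 1) * y ^ (N - m)) * h
  calc ((N : R) + 1) * ((x + y) ^ N * (x - y))
      = 2 * (((N : R) + 1) * (x * (x + y) ^ N)) - ((N : R) + 1) * (x + y) ^ (N + 1) := by ring
    _ = _ := by
      rw [hx, add_pow, mul_sum, mul_sum, ← sum_sub_distrib]
      refine sum_congr rfl fun m _ => ?_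
      ring

theorem sum_range_two_mul_add_one_of_symm {M : Type*} [AddCommMonoid M] (f : ℕ → M) (n : ℕ)
    (hf : ∀ j < n, f (2 * n - j) = f j) :
    ∑ j ∈ range (2 * n + 1), f j = 2 • ∑ j ∈ range n, f j + f n := by
  have hupper : ∑ j ∈ range n, f (n + (j + 1)) = ∑ j ∈ range n, f j := by
    rw [← sum_range_reflect f n]
    refine sum_congr rfl fun j hj => ?_
    have hj := mem_range.mp hj
    rw [← hf (n - 1 - j) (by omega)]
    congr 1
    omega
  rw [show 2 * n + 1 = n + (n + 1) by ring, sum_range_add, sum_range_succ', hupper, two_nsmul,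
    add_zero, add_assoc]

open Complex in
theorem sin_odd_pow_mul_cos_eq_sum_range (n : ℕ) (θ : ℝ) :
    2 ^ (2 * n + 2) * (-1) ^ n * (2 * n + 2) * (Real.sin θ ^ (2 * n + 1) * Real.cos θ) =
      ∑ m ∈ range (2 * n + 3), (-1) ^ m * ((2 * n + 2).choose m : ℝ) * (2 * n + 2 - 2 * m) *
        Real.sin ((2 * n + 2 - 2 * m) * θ) := by
  set u := exp (θ * I)
  set v := exp (-θ * I)
  have hu : u = Complex.cos θ + Complex.sin θ * I := exp_mul_I _
  have hv : v = Complex.cos θ - Complex.sin θ * I := by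
    rw [show v = exp (-θ * I) from rfl, exp_mul_I, Complex.cos_neg, Complex.sin_neg, neg_mul,
      ← sub_eq_add_neg]
  have hI : I ^ (2 * n + 1) = (-1) ^ n * I := by rw [pow_succ, pow_mul, I_sq]
  have hlhs : ((2 * n + 1 : ℕ) + 1 : ℂ) * ((-v + u) ^ (2 * n + 1) * (-v - u)) =
      ↑(-(2 ^ (2 * n + 2) * (-1) ^ n * (2 * n + 2) * (Real.sin θ ^ (2 * n + 1) * Real.cos θ))) *
        I := by
    rw [hu, hv]
    push_cast
    linear_combination
      (-(2 * (n : ℂ) + 2) * 2 ^ (2 * n + 2) * Complex.sin θ ^ (2 * n + 1) * Complex.cos θ) * hI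
  have hterm : ∀ m ∈ range (2 * n + 1 + 2),
      (2 * (m : ℂ) - ((2 * n + 1 : ℕ) + 1)) * ((2 * n + 1 + 1).choose m : ℂ) * (-v) ^ m *
        u ^ (2 * n + 1 + 1 - m) =
      ↑(-((-1) ^ m * ((2 * n + 2).choose m : ℝ) * (2 * n + 2 - 2 * m))) *
        exp (↑((2 * n + 2 - 2 * m) * θ) * I) := by
    intro m hm
    have hm : m ≤ 2 * n + 2 := by have := mem_range.mp hm; omega
    rw [mul_assoc _ ((-v) ^ m), neg_pow, mul_assoc ((-1) ^ m), ← Complex.exp_nat_mul,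
      ← Complex.exp_nat_mul, ← Complex.exp_add]
    push_cast [Nat.cast_sub hm]
    ring_nf
  have key := congrArg im (add_pow_mul_sub_eq_sum (2 * n + 1) (-v) u)
  rw [hlhs, sum_congr rfl hterm, im_sum] at key
  simpa only [im_ofReal_mul, exp_ofReal_mul_I_im, mul_I_im, ofReal_re, neg_mul, sum_neg_distrib,
    neg_inj] using key

theorem cast_choose_two_mul_add_one_mul_div (n k : ℕ) (hk : k ≤ 2 * n + 1) :
    ((2 * n + 1).choose k : ℝ) * ((2 * (n : ℝ) - 2 * k + 2) / (2 * n - k + 2)) =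
      (2 * n + 2).choose k * (2 * n + 2 - 2 * k) / (2 * n + 2) := by
  have hchoose : ((2 * n + 1).choose k : ℝ) * (2 * n + 2) =
      (2 * n + 2).choose k * (2 * n + 2 - k) := by
    have h := Nat.choose_mul_succ_eq (2 * n + 1) k
    rw [show 2 * n + 1 + 1 = 2 * n + 2 by ring] at h
    have h' := congrArg (Nat.cast : ℕ → ℝ) h
    push_cast [Nat.cast_sub (by omega : k ≤ 2 * n + 2)] at h'
    linear_combination h'
  have hden : (2 * n - k + 2 : ℝ) ≠ 0 := by
    have : (k : ℝ) ≤ 2 * n + 1 := by exact_mod_cast hk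
    linarith
  rw [mul_div_assoc', div_eq_div_iff hden (by positivity)]
  linear_combination (2 * (n : ℝ) - 2 * k + 2) * hchoose

theorem sin_odd_pow_mul_cos_eq_sum (n : ℕ) (θ : ℝ) :
    Real.sin θ ^ (2 * n + 1) * Real.cos θ =
      ∑ k ∈ range (n + 1), (2 * n + 1).choose k * ((2 * (n : ℝ) - 2 * k + 2) / (2 * n - k + 2)) *
        (-1) ^ (k + n) / 2 ^ (2 * n + 1) * Real.sin ((2 * n + 2 - 2 * k) * θ) := by
  set f : ℕ → ℝ := fun m => (-1) ^ m * ((2 * n + 2).choose m : ℝ) * (2 * n + 2 - 2 * m) *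
    Real.sin ((2 * n + 2 - 2 * m) * θ)
  have hf : ∀ j < n + 1, f (2 * (n + 1) - j) = f j := by
    intro j hj
    rw [show 2 * (n + 1) = 2 * n + 2 by ring]
    have hsub : ((2 * n + 2 - j : ℕ) : ℝ) = 2 * n + 2 - j := by
      push_cast [Nat.cast_sub (by omega : j ≤ 2 * n + 2)]; ring
    have hsign : (-1 : ℝ) ^ (2 * n + 2 - j) = (-1) ^ j := by
      rw [show 2 * n + 2 - j = j + 2 * (n + 1 - j) by omega, pow_add, pow_mul]; simp
    simp only [f, hsub, hsign, Nat.choose_symm (by omega : j ≤ 2 * n + 2)]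
    rw [show (2 * n + 2 - 2 * (2 * n + 2 - j) : ℝ) = -(2 * n + 2 - 2 * j) by ring, neg_mul,
      Real.sin_neg]
    ring
  have hsum := sin_odd_pow_mul_cos_eq_sum_range n θ
  rw [show 2 * n + 3 = 2 * (n + 1) + 1 by ring, sum_range_two_mul_add_one_of_symm f _ hf] at hsum
  have hmid : f (n + 1) = 0 := by simp only [f]; push_cast; ring
  have hc : (2 : ℝ) ^ (2 * n + 2) * (-1) ^ n * (2 * n + 2) ≠ 0 :=
    mul_ne_zero (mul_ne_zero (by positivity) (pow_ne_zero _ (by norm_num))) (by positivity)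
  apply mul_left_cancel₀ hc
  rw [hsum, hmid, add_zero, nsmul_eq_mul, mul_sum, mul_sum]
  refine sum_congr rfl fun k hk => ?_
  have hsq : ((-1 : ℝ) ^ n) ^ 2 = 1 := by rw [← pow_mul, mul_comm, pow_mul, neg_one_sq, one_pow]
  have hcoef := cast_choose_two_mul_add_one_mul_div n k (by have := mem_range.mp hk; omega)
  simp only [f, hcoef, pow_add, pow_succ (2 : ℝ) (2 * n + 1)]
  field_simp
  rw [hsq]
  push_cast
  ring

end Expansion

section Integrals

open MeasureTheory Set intervalIntegral

theorem sin_mul_div_eq_mul_sinc (c : ℝ) {θ : ℝ} (hθ : θ ≠ 0) :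
    sin (c * θ) / θ = c * sinc (c * θ) := by
  rcases eq_or_ne c 0 with rfl | hc
  · simp
  · rw [sinc_of_ne_zero (mul_ne_zero hc hθ)]
    field_simp

theorem intervalIntegrable_sin_mul_div (c a b : ℝ) :
    IntervalIntegrable (fun θ => sin (c * θ) / θ) volume a b := by
  refine ((continuous_sinc.comp (continuous_const_mul c)).const_smul c).intervalIntegrable a b
    |>.congr_ae (ae_restrict_of_ae ?_)
  filter_upwards [measure_eq_zero_iff_ae_notMem.mp (measure_singleton (0 : ℝ))] with θ hθ
  exact (sin_mul_div_eq_mul_sinc c hθ).symm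

theorem integral_sin_mul_div (c b : ℝ) : ∫ θ in 0..b, sin (c * θ) / θ = Si (c * b) := by
  rcases eq_or_ne c 0 with rfl | hc
  · simp [Si]
  have h : (fun θ => sin (c * θ) / θ) = fun θ => c * (sin (c * θ) / (c * θ)) := by
    ext θ
    rcases eq_or_ne θ 0 with rfl | hθ
    · simp
    · field_simp
  rw [h, intervalIntegral.integral_const_mul, integral_comp_mul_left (fun t => sin t / t) hc,
    mul_zero, smul_eq_mul, mul_inv_cancel_left₀ hc, Si]

theorem integral_sum_mul_sin_mul_div {ι : Type*} (s : Finset ι) (a c : ι → ℝ) (b : ℝ) :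
    ∫ θ in 0..b, (∑ i ∈ s, a i * sin (c i * θ)) / θ = ∑ i ∈ s, a i * Si (c i * b) := by
  simp_rw [Finset.sum_div, mul_div_assoc]
  rw [integral_finsetSum fun i _ => (intervalIntegrable_sin_mul_div (c i) 0 b).const_mul (a i)]
  simp_rw [intervalIntegral.integral_const_mul, integral_sin_mul_div]

theorem sin_image_Icc_zero_pi_div_two : sin '' Icc 0 (π / 2) = Icc 0 1 := by
  ext y
  constructor
  · rintro ⟨θ, hθ, rfl⟩
    exact ⟨sin_nonneg_of_nonneg_of_le_pi hθ.1 (by linarith [hθ.2, pi_pos]), sin_le_one θ⟩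
  · intro hy
    exact ⟨arcsin y, ⟨arcsin_nonneg.2 hy.1, arcsin_le_pi_div_two y⟩,
      sin_arcsin (by linarith [hy.1]) hy.2⟩

theorem integral_zero_one_eq_integral_cos_smul_comp_sin {E : Type*} [NormedAddCommGroup E]
    [NormedSpace ℝ E] (g : ℝ → E) :
    ∫ x in 0..1, g x = ∫ θ in 0..π / 2, cos θ • g (sin θ) := by
  have hIcc : Icc 0 (π / 2) ⊆ Icc (-(π / 2)) (π / 2) := Icc_subset_Icc_left (by linarith [pi_pos])
  rw [integral_of_le zero_le_one, integral_of_le (by positivity), ← integral_Icc_eq_integral_Ioc,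
    ← integral_Icc_eq_integral_Ioc, ← sin_image_Icc_zero_pi_div_two,
    integral_image_eq_integral_abs_deriv_smul measurableSet_Icc
      (fun θ _ => (hasDerivAt_sin θ).hasDerivWithinAt) (injOn_sin.mono hIcc)]
  exact setIntegral_congr_fun measurableSet_Icc fun θ hθ => by
    rw [abs_of_nonneg (cos_nonneg_of_mem_Icc (hIcc hθ))]

theorem integral_div_arcsin_eq (g : ℝ → ℝ) :
    ∫ x in 0..1, g x / arcsin x = ∫ θ in 0..π / 2, g (sin θ) * cos θ / θ := by
  rw [integral_zero_one_eq_integral_cos_smul_comp_sin]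
  refine integral_congr fun θ hθ => ?_
  rw [uIcc_of_le (by positivity)] at hθ
  rw [smul_eq_mul, arcsin_sin (by linarith [hθ.1, pi_pos]) hθ.2]
  ring

end Integrals

theorem integral_pow_div_arcsin (n : ℕ) :
    ∫ x in (0:ℝ)..1, x ^ (2 * n + 1) / Real.arcsin x =
      (1 / 2 ^ (2 * n + 1)) * ∑ k ∈ Finset.range (n + 1),
        ((2 * n + 1).choose k : ℝ) * ((2 * (n : ℝ) - 2 * k + 2) / (2 * (n : ℝ) - k + 2)) *
          Si (π * ((n : ℝ) + 1 - k)) * (-1) ^ (k + n) := by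
  rw [integral_div_arcsin_eq (· ^ (2 * n + 1))]
  simp_rw [sin_odd_pow_mul_cos_eq_sum]
  rw [integral_sum_mul_sin_mul_div, Finset.mul_sum]
  refine Finset.sum_congr rfl fun k _ => ?_
  rw [show (2 * n + 2 - 2 * k : ℝ) * (π / 2) = π * (n + 1 - k) by ring]
  ring
end

section
/- Let Si denote the sine integral, Si(z) = ∫₀^z (sin t)/t dt, and let arcsin denote the real inverse sine function. For every natural number n, the function F(x) = (1/2^{2n+1}) · Σ_{k=0}^n C(2n+1, k) · ((2n-2k+2)/(2n-k+2)) · Si((2n+2-2k) · arcsin(x)) · (-1)^{k+n} satisfies F'(x) = x^{2n+1} / arcsin(x) for all x in the open interval (0, 1), where C(n,k) denotes the binomial coefficient. -/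
/-!
Write `θ = arcsin x`. Since `Si' z = sin z / z`, the chain rule reduces the claim to the identity
`∑ₖ aₖ (-1)^(k+n) sin ((2n+2-2k) θ) = 2^(2n+1) sin^(2n+1) θ cos θ`, where
`aₖ = C(2n+1,k) (2n+2-2k)/(2n+2-k) = 2 C(2n+1,k) - C(2n+2,k)`. This is the power-reduction formula
for `sin^(2n+1) θ` (expand `(e^{iθ} - e^{-iθ})^(2n+1)` and pair the terms `k` and `2n+1-k`),
multiplied by `2 cos θ` by the product-to-sum formula and reindexed with Pascal's rule.
-/

open Real

open Finset

/-- Changing the integrand at the single point `0` makes it continuous. -/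
lemma Si_eq_integral_sinc (z : ℝ) : Si z = ∫ t in (0 : ℝ)..z, sinc t := by
  refine intervalIntegral.integral_congr_ae ?_
  filter_upwards [MeasureTheory.volume.ae_ne (0 : ℝ)] with t ht _
  rw [sinc_of_ne_zero ht]

lemma hasDerivAt_Si (z : ℝ) : HasDerivAt Si (sinc z) z := by
  rw [funext Si_eq_integral_sinc]
  exact (continuous_sinc.integral_hasStrictDerivAt 0 z).hasDerivAt

lemma hasDerivAt_Si_const_mul (c : ℝ) {θ : ℝ} (hθ : θ ≠ 0) :
    HasDerivAt (fun θ => Si (c * θ)) (sin (c * θ) / θ) θ := by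
  refine ((hasDerivAt_Si (c * θ)).comp θ ((hasDerivAt_id θ).const_mul c)).congr_deriv ?_
  rcases eq_or_ne c 0 with rfl | hc
  · simp
  · rw [sinc_of_ne_zero (mul_ne_zero hc hθ)]
    field_simp

lemma sub_pow_odd_of_mul_eq_one {R : Type*} [CommRing R] {z w : R} (hzw : z * w = 1) (n : ℕ) :
    (z - w) ^ (2 * n + 1) = ∑ k ∈ range (n + 1),
      (-1) ^ k * ((2 * n + 1).choose k : R) * (z ^ (2 * n + 1 - 2 * k) - w ^ (2 * n + 1 - 2 * k)) := by
  rw [sub_eq_add_neg, add_pow, show 2 * n + 1 + 1 = (n + 1) + (n + 1) by ring, sum_range_add]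
  nth_rewrite 2 [← sum_range_reflect]
  rw [← sum_add_distrib]
  refine sum_congr rfl fun k hk => ?_
  have hkn : k ≤ n := Nat.lt_succ_iff.mp (mem_range.mp hk)
  set j := 2 * n + 1 - 2 * k
  have hj : Odd j := ⟨n - k, by omega⟩
  rw [show n + 1 + (n + 1 - 1 - k) = k + j by omega, show 2 * n + 1 - k = k + j by omega,
    show 2 * n + 1 - (k + j) = k by omega,
    Nat.choose_symm_of_eq_add (show 2 * n + 1 = (k + j) + k by omega), neg_pow, neg_pow, pow_add, pow_add, pow_add, hj.neg_one_pow]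
  have hzwk : z ^ k * w ^ k = 1 := by rw [← mul_pow, hzw, one_pow]
  linear_combination ((-1) ^ k * ((2 * n + 1).choose k : R) * (z ^ j - w ^ j)) * hzwk

lemma Complex.exp_mul_I_pow_sub_exp_neg_mul_I_pow (x : ℂ) (m : ℕ) :
    Complex.exp (x * Complex.I) ^ m - Complex.exp (-x * Complex.I) ^ m =
      2 * Complex.I * Complex.sin (m * x) := by
  rw [← Complex.exp_nat_mul, ← Complex.exp_nat_mul, mul_right_comm, Complex.two_sin]
  ring_nf
  rw [Complex.I_sq]
  ring

lemma Complex.sin_pow_odd_eq_sum (n : ℕ) (x : ℂ) :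
    2 ^ (2 * n) * Complex.sin x ^ (2 * n + 1) = ∑ k ∈ range (n + 1),
      (-1) ^ (k + n) * ((2 * n + 1).choose k : ℂ) * Complex.sin ((2 * n + 1 - 2 * k) * x) := by
  have hexp := sub_pow_odd_of_mul_eq_one
    (z := Complex.exp (x * Complex.I)) (w := Complex.exp (-x * Complex.I))
    (by rw [← Complex.exp_add]; ring_nf; exact Complex.exp_zero) n
  have hbase : Complex.exp (x * Complex.I) - Complex.exp (-x * Complex.I) =
      2 * Complex.I * Complex.sin x := by
    simpa using Complex.exp_mul_I_pow_sub_exp_neg_mul_I_pow x 1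
  simp only [hbase, Complex.exp_mul_I_pow_sub_exp_neg_mul_I_pow] at hexp
  have hsq : ((-1 : ℂ) ^ n) ^ 2 = 1 := by rw [← pow_mul, mul_comm, (even_two_mul n).neg_one_pow]
  have hunit : 2 * Complex.I * (-1) ^ n ≠ 0 := by simp [Complex.I_ne_zero]
  refine mul_left_cancel₀ hunit ?_
  calc 2 * Complex.I * (-1) ^ n * (2 ^ (2 * n) * Complex.sin x ^ (2 * n + 1))
      = (2 * Complex.I * Complex.sin x) ^ (2 * n + 1) := by
        rw [mul_pow, mul_pow, pow_succ Complex.I, pow_mul Complex.I, Complex.I_sq]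
        ring
    _ = _ := hexp
    _ = _ := by
      rw [mul_sum]
      refine sum_congr rfl fun k hk => ?_
      rw [Nat.cast_sub (by have := mem_range.mp hk; omega), pow_add]
      push_cast
      linear_combination (-2 * Complex.I * (-1) ^ k * ((2 * n + 1).choose k : ℂ) *
        Complex.sin ((2 * n + 1 - 2 * k) * x)) * hsq

lemma Real.sin_pow_odd_eq_sum (n : ℕ) (θ : ℝ) :
    2 ^ (2 * n) * sin θ ^ (2 * n + 1) = ∑ k ∈ range (n + 1),
      (-1) ^ (k + n) * ((2 * n + 1).choose k : ℝ) * sin ((2 * n + 1 - 2 * k) * θ) := by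
  exact_mod_cast Complex.sin_pow_odd_eq_sum n θ

/-- Pascal's rule absorbs the shift `k ↦ k + 1`; the boundary terms vanish because `sin 0 = 0` and
`C(2n+1, 0) = C(2n+2, 0)`. -/
lemma Real.sum_choose_mul_sin_shift (n : ℕ) (θ : ℝ) :
    ∑ k ∈ range (n + 1), (-1) ^ (k + n) * ((2 * n + 1).choose k : ℝ) * sin ((2 * n - 2 * k) * θ) =
      ∑ k ∈ range (n + 1), (((2 * n + 1).choose k : ℝ) - (2 * n + 2).choose k) * (-1) ^ (k + n) *
        sin ((2 * n + 2 - 2 * k) * θ) := by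
  rw [sum_range_succ, sum_range_succ']
  simp only [sub_self, mul_zero, zero_mul, sin_zero, add_zero, Nat.choose_zero_right]
  refine sum_congr rfl fun k _ => ?_
  rw [show (2 * n + 2).choose (k + 1) = (2 * n + 1).choose k + (2 * n + 1).choose (k + 1) from
    Nat.choose_succ_succ' _ _]
  push_cast
  rw [show (2 * n + 2 - 2 * (k + 1 : ℝ)) * θ = (2 * n - 2 * k) * θ by ring]
  ring

lemma Real.sin_pow_odd_mul_cos_eq_sum (n : ℕ) (θ : ℝ) :
    2 ^ (2 * n + 1) * sin θ ^ (2 * n + 1) * cos θ = ∑ k ∈ range (n + 1),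
      (2 * ((2 * n + 1).choose k : ℝ) - (2 * n + 2).choose k) * (-1) ^ (k + n) *
        sin ((2 * n + 2 - 2 * k) * θ) := by
  calc 2 ^ (2 * n + 1) * sin θ ^ (2 * n + 1) * cos θ
      = 2 * cos θ * (2 ^ (2 * n) * sin θ ^ (2 * n + 1)) := by ring
    _ = ∑ k ∈ range (n + 1), (-1) ^ (k + n) * ((2 * n + 1).choose k : ℝ) *
          (sin ((2 * n + 2 - 2 * k) * θ) + sin ((2 * n - 2 * k) * θ)) := by
      rw [sin_pow_odd_eq_sum, mul_sum]
      refine sum_congr rfl fun k _ => ?_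
      rw [show (2 * n + 2 - 2 * k) * θ = (2 * n + 1 - 2 * k) * θ + θ by ring,
        show (2 * n - 2 * k) * θ = (2 * n + 1 - 2 * k) * θ - θ by ring]
      linear_combination ((-1) ^ (k + n) * ((2 * n + 1).choose k : ℝ)) *
        two_mul_sin_mul_cos ((2 * n + 1 - 2 * k) * θ) θ
    _ = _ := by
      simp only [mul_add, sum_add_distrib]
      rw [sum_choose_mul_sin_shift, ← sum_add_distrib]
      refine sum_congr rfl fun k _ => ?_
      ring

lemma choose_mul_div_eq_two_mul_choose_sub_succ_choose {m k : ℕ} (hk : k ≤ m) :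
    (m.choose k : ℝ) * ((m + 1 - 2 * k) / (m + 1 - k)) = 2 * m.choose k - (m + 1).choose k := by
  have hk' : (m + 1 - k : ℝ) ≠ 0 := by
    have : (k : ℝ) ≤ m := by exact_mod_cast hk
    linarith
  have hpascal : (m.choose k : ℝ) * (m + 1) = (m + 1).choose k * (m + 1 - k) := by
    have h := congrArg (Nat.cast : ℕ → ℝ) (Nat.choose_mul_succ_eq m k)
    push_cast [Nat.cast_sub (show k ≤ m + 1 by omega)] at h
    exact h
  field_simp
  linear_combination -hpascal

lemma hasDerivAt_sum_Si_const_mul (n : ℕ) {θ : ℝ} (hθ : θ ≠ 0) :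
    HasDerivAt (fun θ : ℝ => (1 / 2 ^ (2 * n + 1)) * ∑ k ∈ range (n + 1),
        ((2 * n + 1).choose k : ℝ) * ((2 * (n : ℝ) - 2 * k + 2) / (2 * (n : ℝ) - k + 2)) *
          Si ((2 * (n : ℝ) + 2 - 2 * k) * θ) * (-1) ^ (k + n))
      (sin θ ^ (2 * n + 1) * cos θ / θ) θ := by
  have hterm (k : ℕ) := (((hasDerivAt_Si_const_mul (2 * (n : ℝ) + 2 - 2 * k) hθ).const_mul
    (((2 * n + 1).choose k : ℝ) * ((2 * (n : ℝ) - 2 * k + 2) / (2 * (n : ℝ) - k + 2)))).mul_const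
    ((-1 : ℝ) ^ (k + n)))
  refine ((HasDerivAt.fun_sum fun k _ => hterm k).const_mul _).congr_deriv ?_
  calc _ = 1 / 2 ^ (2 * n + 1) * (2 ^ (2 * n + 1) * sin θ ^ (2 * n + 1) * cos θ) / θ := by
        rw [sin_pow_odd_mul_cos_eq_sum, mul_div_assoc, sum_div]
        congr 1
        refine sum_congr rfl fun k hk => ?_
        have hcoef := choose_mul_div_eq_two_mul_choose_sub_succ_choose
          (show k ≤ 2 * n + 1 by have := mem_range.mp hk; omega)
        push_cast at hcoef
        rw [show (2 * (n : ℝ) - 2 * k + 2) / (2 * (n : ℝ) - k + 2) =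
          (2 * n + 1 + 1 - 2 * k) / (2 * n + 1 + 1 - k) by ring_nf, hcoef]
        ring
    _ = _ := by field_simp

theorem hasDerivAt_antiderivative_pow_odd_div_arcsin (n : ℕ) :
    ∀ x ∈ Set.Ioo (0 : ℝ) 1,
      HasDerivAt (fun x : ℝ =>
          (1 / 2 ^ (2 * n + 1)) * ∑ k ∈ Finset.range (n + 1),
            ((2 * n + 1).choose k : ℝ) * ((2 * (n : ℝ) - 2 * k + 2) / (2 * (n : ℝ) - k + 2)) *
              Si ((2 * (n : ℝ) + 2 - 2 * k) * Real.arcsin x) * (-1) ^ (k + n))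
        (x ^ (2 * n + 1) / Real.arcsin x) x := by
  rintro x ⟨hx0, hx1⟩
  have hθ : arcsin x ≠ 0 := (arcsin_pos.mpr hx0).ne'
  have hsqrt : 0 < √(1 - x ^ 2) := sqrt_pos.mpr (by nlinarith)
  refine ((hasDerivAt_sum_Si_const_mul n hθ).comp x
    (hasDerivAt_arcsin (by linarith) hx1.ne)).congr_deriv ?_
  rw [cos_arcsin, sin_arcsin (by linarith) hx1.le]
  field_simp
end

section
/- Let Ci denote the cosine integral, defined for y > 0 by Ci(y) = γ + ln(y) + ∫₀^y (cos t − 1)/t dt, where γ is the Euler–Mascheroni constant, and let arcsin denote the real inverse sine function. For every natural number n, the function F(x) = (1/2^{2n}) · Σ_{k=0}^n C(2n, k) · ((2n-2k+1)/(2n-k+1)) · Ci((2n+1-2k) · arcsin(x)) · (-1)^{k+n} satisfies F'(x) = x^{2n} / arcsin(x) for all x in the open interval (0, 1), where C(n,k) denotes the binomial coefficient. -/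
/-!
Write θ = arcsin x. Since Ci'(y) = cos y / y, the k-th term contributes a multiple of
cos((2n+1-2k)θ) · θ'/θ, and its coefficient C(2n,k)(2n-2k+1)/(2n-k+1) equals
C(2n+1,k)(2n+1-2k)/(2n+1). The resulting sum is the θ-derivative of the power-reduction formula
4ⁿ sin^{2n+1} θ = Σₖ (-1)^{k+n} C(2n+1,k) sin((2n+1-2k)θ), i.e. 4ⁿ(2n+1) sin^{2n} θ cos θ,
and θ' = 1/cos θ, sin θ = x leave x^{2n}/θ. The power-reduction formula comes from expanding
(e^{iθ} - e^{-iθ})^{2n+1} and pairing the terms of index k and 2n+1-k.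
-/

open Real Finset

/-- The cosine integral, `Ci(y) = γ + log y + ∫₀^y (cos t − 1)/t dt` (for `y > 0`). -/
noncomputable def Ci (y : ℝ) : ℝ :=
  Real.eulerMascheroniConstant + Real.log y + ∫ t in (0:ℝ)..y, (Real.cos t - 1) / t

theorem Finset.sum_range_two_mul_eq_sum_add_reflect {M : Type*} [AddCommMonoid M]
    (f : ℕ → M) (m : ℕ) :
    ∑ j ∈ range (2 * m), f j = ∑ j ∈ range m, (f j + f (2 * m - 1 - j)) := by
  rw [two_mul, sum_range_add, sum_add_distrib, ← sum_range_reflect (fun j => f (m + j))]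
  refine congrArg _ (sum_congr rfl fun j hj => ?_)
  rw [mem_range] at hj
  congr 1
  omega

theorem sub_inv_pow_two_mul_add_one {K : Type*} [Field K] {a : K} (ha : a ≠ 0) (n : ℕ) :
    (a - a⁻¹) ^ (2 * n + 1) = ∑ k ∈ range (n + 1),
      (-1) ^ k * ((2 * n + 1).choose k : K) *
        (a ^ (2 * n + 1 - 2 * k) - a⁻¹ ^ (2 * n + 1 - 2 * k)) := by
  have hcancel : ∀ j, a ^ j * a⁻¹ ^ j = 1 := fun j => by
    rw [← mul_pow, mul_inv_cancel₀ ha, one_pow]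
  rw [sub_pow, show 2 * n + 1 + 1 = 2 * (n + 1) by ring, sum_range_two_mul_eq_sum_add_reflect]
  refine sum_congr rfl fun k hk => ?_
  rw [mem_range] at hk
  rw [show 2 * (n + 1) - 1 - k = 2 * n + 1 - k by omega,
    Nat.choose_symm (by omega), Nat.sub_sub_self (by omega : k ≤ 2 * n + 1)]
  have hlow : a ^ k * a⁻¹ ^ (2 * n + 1 - k) = a⁻¹ ^ (2 * n + 1 - 2 * k) := by
    rw [show 2 * n + 1 - k = k + (2 * n + 1 - 2 * k) by omega, pow_add, ← mul_assoc, hcancel,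
      one_mul]
  have hhigh : a ^ (2 * n + 1 - k) * a⁻¹ ^ k = a ^ (2 * n + 1 - 2 * k) := by
    rw [show 2 * n + 1 - k = (2 * n + 1 - 2 * k) + k by omega, pow_add, mul_assoc, hcancel, mul_one]
  rw [mul_assoc _ (a ^ k), hlow, mul_assoc _ (a ^ (2 * n + 1 - k)), hhigh,
    show k + (2 * n + 1) = k + 1 + 2 * n by ring,
    show 2 * n + 1 - k + (2 * n + 1) = k + 2 * (2 * n + 1 - k) by omega]
  simp only [pow_add, pow_mul, neg_one_sq, one_pow, mul_one, pow_one]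
  ring

theorem Complex.exp_mul_I_pow_sub_inv_pow (z : ℂ) (m : ℕ) :
    Complex.exp (z * Complex.I) ^ m - (Complex.exp (z * Complex.I))⁻¹ ^ m
      = 2 * Complex.I * Complex.sin (m * z) := by
  rw [← Complex.exp_neg, ← Complex.exp_nat_mul, ← Complex.exp_nat_mul, mul_right_comm,
    Complex.two_sin, mul_assoc, Complex.I_mul_I]
  ring_nf

theorem Complex.sin_pow_two_mul_add_one (n : ℕ) (z : ℂ) :
    4 ^ n * Complex.sin z ^ (2 * n + 1) = ∑ k ∈ range (n + 1),
      (-1) ^ (k + n) * ((2 * n + 1).choose k : ℂ) * Complex.sin ((2 * n + 1 - 2 * k) * z) := by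
  have h := sub_inv_pow_two_mul_add_one (Complex.exp_ne_zero (z * Complex.I)) n
  have h1 := Complex.exp_mul_I_pow_sub_inv_pow z 1
  rw [pow_one, pow_one, Nat.cast_one, one_mul] at h1
  simp only [h1, Complex.exp_mul_I_pow_sub_inv_pow] at h
  have hI : (2 * Complex.I) ^ (2 * n + 1) = 2 * Complex.I * (-4) ^ n := by
    rw [pow_succ', pow_mul, mul_pow, Complex.I_sq]; norm_num
  have hsign : ((-1) ^ n : ℂ) * (-4) ^ n = 4 ^ n := by rw [← mul_pow]; norm_num
  rw [← mul_right_inj' (mul_ne_zero two_ne_zero Complex.I_ne_zero)]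
  calc 2 * Complex.I * (4 ^ n * Complex.sin z ^ (2 * n + 1))
      = (-1) ^ n * (2 * Complex.I * Complex.sin z) ^ (2 * n + 1) := by
        rw [mul_pow, hI, ← hsign]; ring
    _ = _ := by
        rw [h, mul_sum, mul_sum]
        refine sum_congr rfl fun k hk => ?_
        rw [mem_range] at hk
        push_cast [Nat.cast_sub (by omega : 2 * k ≤ 2 * n + 1)]
        ring

theorem Real.sin_pow_two_mul_add_one (n : ℕ) (θ : ℝ) :
    4 ^ n * sin θ ^ (2 * n + 1) = ∑ k ∈ range (n + 1),
      (-1) ^ (k + n) * ((2 * n + 1).choose k : ℝ) * sin ((2 * n + 1 - 2 * k) * θ) := by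
  exact_mod_cast Complex.sin_pow_two_mul_add_one n θ

theorem Real.sum_choose_mul_cos_eq (n : ℕ) (θ : ℝ) :
    ∑ k ∈ range (n + 1), (-1) ^ (k + n) * ((2 * n + 1).choose k : ℝ) * (2 * n + 1 - 2 * k) *
      cos ((2 * n + 1 - 2 * k) * θ) = 4 ^ n * (2 * n + 1) * sin θ ^ (2 * n) * cos θ := by
  have hsum : HasDerivAt (fun t => ∑ k ∈ range (n + 1),
      (-1) ^ (k + n) * ((2 * n + 1).choose k : ℝ) * sin ((2 * n + 1 - 2 * k) * t))
      (∑ k ∈ range (n + 1), (-1) ^ (k + n) * ((2 * n + 1).choose k : ℝ) * (2 * n + 1 - 2 * k) *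
        cos ((2 * n + 1 - 2 * k) * θ)) θ :=
    HasDerivAt.fun_sum fun k _ =>
      ((((hasDerivAt_id θ).const_mul (2 * n + 1 - 2 * k : ℝ)).sin).const_mul
        ((-1) ^ (k + n) * ((2 * n + 1).choose k : ℝ))).congr_deriv (by simp only [id]; ring)
  have hpow : HasDerivAt (fun t => 4 ^ n * sin t ^ (2 * n + 1))
      (4 ^ n * (2 * n + 1) * sin θ ^ (2 * n) * cos θ) θ :=
    (((hasDerivAt_sin θ).fun_pow (2 * n + 1)).const_mul ((4 : ℝ) ^ n)).congr_deriv
      (by push_cast; ring)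
  simp only [sin_pow_two_mul_add_one] at hpow
  exact hsum.unique hpow

theorem Nat.choose_two_mul_mul_div_eq (n k : ℕ) (hk : k ≤ n) :
    ((2 * n).choose k : ℝ) * ((2 * n - 2 * k + 1) / (2 * n - k + 1))
      = (2 * n + 1).choose k * (2 * n + 1 - 2 * k) / (2 * n + 1) := by
  have hchoose := Nat.choose_mul_succ_eq (2 * n) k
  rw [← Nat.cast_inj (R := ℝ)] at hchoose
  push_cast [Nat.cast_sub (by omega : k ≤ 2 * n + 1)] at hchoose
  have hkn : (k : ℝ) ≤ n := by exact_mod_cast hk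
  have hden : (2 * n - k + 1 : ℝ) ≠ 0 := by linarith
  field_simp
  linear_combination (2 * n - 2 * k + 1 : ℝ) * hchoose

theorem Real.sum_choose_mul_div_mul_cos_eq (n : ℕ) (θ : ℝ) :
    ∑ k ∈ range (n + 1), ((2 * n).choose k : ℝ) * ((2 * n - 2 * k + 1) / (2 * n - k + 1)) *
      cos ((2 * n + 1 - 2 * k) * θ) * (-1) ^ (k + n) = 4 ^ n * sin θ ^ (2 * n) * cos θ := by
  have hterm : ∀ k ∈ range (n + 1),
      ((2 * n).choose k : ℝ) * ((2 * n - 2 * k + 1) / (2 * n - k + 1)) *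
        cos ((2 * n + 1 - 2 * k) * θ) * (-1) ^ (k + n)
      = (-1) ^ (k + n) * ((2 * n + 1).choose k : ℝ) * (2 * n + 1 - 2 * k) *
        cos ((2 * n + 1 - 2 * k) * θ) / (2 * n + 1) := fun k hk => by
    rw [Nat.choose_two_mul_mul_div_eq n k (by simpa [Nat.lt_succ_iff] using hk)]
    ring
  rw [sum_congr rfl hterm, ← sum_div, sum_choose_mul_cos_eq]
  field_simp

theorem continuous_cos_sub_one_div : Continuous fun t : ℝ => (cos t - 1) / t := by
  -- at `t = 0` the junk value `(cos 0 - 1) / 0 = 0` happens to be `cos' 0`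
  have hdslope : (fun t : ℝ => (cos t - 1) / t) = dslope cos 0 := by
    ext t
    rcases eq_or_ne t 0 with rfl | ht
    · simp
    · simp [dslope_of_ne _ ht, slope_def_field]
  rw [hdslope, ← continuousOn_univ]
  exact (continuousOn_dslope Filter.univ_mem).2
    ⟨continuous_cos.continuousOn, differentiableAt_cos⟩

theorem hasDerivAt_Ci {y : ℝ} (hy : y ≠ 0) : HasDerivAt Ci (cos y / y) y := by
  have hint : HasDerivAt (fun u => ∫ t in (0 : ℝ)..u, (cos t - 1) / t) ((cos y - 1) / y) y :=
    intervalIntegral.integral_hasDerivAt_right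
      (continuous_cos_sub_one_div.intervalIntegrable 0 y)
      (continuous_cos_sub_one_div.stronglyMeasurableAtFilter _ _)
      continuous_cos_sub_one_div.continuousAt
  refine (((hasDerivAt_log hy).const_add eulerMascheroniConstant).fun_add hint).congr_deriv ?_
  field_simp
  ring

theorem HasDerivAt.Ci_const_mul {f : ℝ → ℝ} {f' x c : ℝ} (hf : HasDerivAt f f' x) (hc : c ≠ 0)
    (hfx : f x ≠ 0) : HasDerivAt (fun y => Ci (c * f y)) (Real.cos (c * f x) / f x * f') x := by
  refine ((hasDerivAt_Ci (mul_ne_zero hc hfx)).comp x (hf.const_mul c)).congr_deriv ?_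
  field_simp

theorem hasDerivAt_antiderivative_pow_even_div_arcsin (n : ℕ) :
    ∀ x ∈ Set.Ioo (0 : ℝ) 1,
      HasDerivAt (fun x : ℝ =>
          (1 / 2 ^ (2 * n)) * ∑ k ∈ Finset.range (n + 1),
            ((2 * n).choose k : ℝ) * ((2 * (n : ℝ) - 2 * k + 1) / (2 * (n : ℝ) - k + 1)) *
              Ci ((2 * (n : ℝ) + 1 - 2 * k) * Real.arcsin x) * (-1) ^ (k + n))
        (x ^ (2 * n) / Real.arcsin x) x := by
  rintro x ⟨hx0, hx1⟩
  have hθ : 0 < arcsin x := arcsin_pos.2 hx0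
  have hcos : 0 < cos (arcsin x) := by rw [cos_arcsin]; exact sqrt_pos.2 (by nlinarith)
  have harcsin : HasDerivAt arcsin (1 / cos (arcsin x)) x := by
    rw [cos_arcsin]; exact hasDerivAt_arcsin (by linarith) hx1.ne
  have hfreq : ∀ k ∈ range (n + 1), 2 * (n : ℝ) + 1 - 2 * k ≠ 0 := fun k hk => by
    have : (k : ℝ) ≤ n := by exact_mod_cast Nat.lt_succ_iff.1 (mem_range.1 hk)
    linarith
  refine HasDerivAt.congr_deriv ((HasDerivAt.fun_sum fun k hk =>
    ((harcsin.Ci_const_mul (hfreq k hk) hθ.ne').const_mul _).mul_const _).const_mul _) ?_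
  have hsum := sum_choose_mul_div_mul_cos_eq n (arcsin x)
  rw [sin_arcsin (by linarith) hx1.le] at hsum
  calc _ = (∑ k ∈ range (n + 1), ((2 * n).choose k : ℝ) *
        ((2 * (n : ℝ) - 2 * k + 1) / (2 * (n : ℝ) - k + 1)) *
          cos ((2 * (n : ℝ) + 1 - 2 * k) * arcsin x) * (-1) ^ (k + n)) /
            (2 ^ (2 * n) * arcsin x * cos (arcsin x)) := by
        rw [mul_sum, sum_div]
        exact sum_congr rfl fun _ _ => by field_simp
    _ = _ := by
        rw [hsum, pow_mul (2 : ℝ)]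
        field_simp
        norm_num
end

section
/- For every real number x with x² ≤ 1, (arcsin x)² = Σ_{k=0}^∞ 2^{2k} · (k!)² · x^{2k+2} / ((2k+1)! · (k+1)), where arcsin denotes the real inverse sine function. -/
/-!
Write `b k = (2k)‼ / (2k+1)‼`, so that the series is `F y = ∑ b k / (k+1) * y ^ (2k+2)`, and put
`G y = ∑ b k * y ^ (2k+1)`. The recurrence `(2k+3) b (k+1) = (2k+2) b k` turns into the
differential equation `(1 - y²) G' = 1 + y G`, which says that `√(1 - y²) G` and `arcsin` have the
same derivative on `(-1, 1)`; both vanish at `0`, so `G = arcsin / √(1 - y²)`. Then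
`F' = 2 G = (arcsin²)'`, which gives the identity on the open interval. It extends to `y = ±1` by
continuity, the coefficients being summable because `b k / (k+1) ≤ 3 (b k - b (k+1))` telescopes.
-/

open Real Set
open scoped Nat

lemma summable_affine_mul_pow_two_mul_add {r : ℝ} (hr : |r| < 1) (a b : ℝ) (j : ℕ) :
    Summable fun k : ℕ => (a * k + b) * r ^ (2 * k + j) := by
  have hr2 : ‖r ^ 2‖ < 1 := by
    rw [norm_pow, Real.norm_eq_abs, sq_lt_one_iff₀ (abs_nonneg r)]
    exact hr
  have hlin : Summable fun k : ℕ => (a * k + b) * (r ^ 2) ^ k :=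
    (((summable_pow_mul_geometric_of_norm_lt_one 1 hr2).mul_left a).add
      ((summable_geometric_of_norm_lt_one hr2).mul_left b)).congr fun k => by ring
  refine (hlin.mul_right (r ^ j)).congr fun k => ?_
  rw [pow_add, pow_mul]
  ring

lemma summable_mul_pow_two_mul_add {c : ℕ → ℝ} {a b : ℝ} (hc : ∀ k, |c k| ≤ a * k + b)
    {y : ℝ} (hy : |y| < 1) (j : ℕ) : Summable fun k => c k * y ^ (2 * k + j) := by
  refine .of_norm_bounded (summable_affine_mul_pow_two_mul_add (abs_abs y ▸ hy) a b j)
    fun k => ?_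
  rw [norm_mul, norm_pow, Real.norm_eq_abs, Real.norm_eq_abs]
  exact mul_le_mul_of_nonneg_right (hc k) (by positivity)

lemma hasDerivAt_tsum_mul_pow_two_mul_add_one {c : ℕ → ℝ} {C : ℝ} (hc : ∀ k, |c k| ≤ C)
    (j : ℕ) {x : ℝ} (hx : |x| < 1) :
    HasDerivAt (fun y => ∑' k, c k * y ^ (2 * k + j + 1))
      (∑' k, c k * (2 * k + j + 1 : ℕ) * x ^ (2 * k + j)) x := by
  obtain ⟨r, hxr, hr1⟩ := exists_between hx
  have hr : |r| < 1 := by rwa [abs_of_pos ((abs_nonneg x).trans_lt hxr)]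
  refine hasDerivAt_tsum_of_isPreconnected (g := fun k y => c k * y ^ (2 * k + j + 1))
    (g' := fun k y => c k * (2 * k + j + 1 : ℕ) * y ^ (2 * k + j))
    (summable_affine_mul_pow_two_mul_add hr (2 * C) (C * (j + 1)) j) isOpen_Ioo
    isPreconnected_Ioo (fun k y _ => ?_) (fun k y hy => ?_) (mem_Ioo.2 (abs_lt.1 hxr))
    ?_ (mem_Ioo.2 (abs_lt.1 hxr))
  · simpa [mul_assoc] using (hasDerivAt_pow (2 * k + j + 1) y).const_mul (c k)
  · have hyr : |y| ≤ r := (abs_lt.2 (mem_Ioo.1 hy)).le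
    have hC : 0 ≤ C := (abs_nonneg _).trans (hc 0)
    rw [norm_mul, norm_mul, norm_pow, Real.norm_eq_abs, Real.norm_eq_abs, Real.norm_eq_abs,
      Nat.abs_cast]
    calc |c k| * ((2 * k + j + 1 : ℕ) : ℝ) * |y| ^ (2 * k + j)
        ≤ C * ((2 * k + j + 1 : ℕ) : ℝ) * r ^ (2 * k + j) := by
          gcongr
          exact hc k
      _ = (2 * C * k + C * (j + 1)) * r ^ (2 * k + j) := by push_cast; ring
  · simpa only [add_assoc] using
      summable_mul_pow_two_mul_add (a := 0) (by simpa using hc) hx (j + 1)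

theorem IsOpen.eqOn_of_hasDerivAt {𝕜 G : Type*} [RCLike 𝕜] [NormedAddCommGroup G]
    [NormedSpace 𝕜 G] {f g f' : 𝕜 → G} {s : Set 𝕜} {x : 𝕜} (hs : IsOpen s)
    (hs' : IsPreconnected s) (hf : ∀ y ∈ s, HasDerivAt f (f' y) y)
    (hg : ∀ y ∈ s, HasDerivAt g (f' y) y) (hx : x ∈ s) (hfgx : f x = g x) : EqOn f g s :=
  hs.eqOn_of_deriv_eq hs' (fun y hy => (hf y hy).differentiableAt.differentiableWithinAt)
    (fun y hy => (hg y hy).differentiableAt.differentiableWithinAt)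
    (fun y hy => (hf y hy).deriv.trans (hg y hy).deriv.symm) hx hfgx

noncomputable def wallisRatio (k : ℕ) : ℝ := (2 * k)‼ / (2 * k + 1)‼

lemma wallisRatio_zero : wallisRatio 0 = 1 := by simp [wallisRatio]

lemma wallisRatio_pos (k : ℕ) : 0 < wallisRatio k := by
  unfold wallisRatio; positivity

lemma wallisRatio_succ (k : ℕ) :
    wallisRatio (k + 1) = (2 * k + 2) / (2 * k + 3) * wallisRatio k := by
  simp only [wallisRatio, show 2 * (k + 1) = 2 * k + 2 by ring,
    show 2 * k + 2 + 1 = 2 * k + 1 + 2 by ring, Nat.doubleFactorial_add_two]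
  push_cast
  field_simp
  ring

lemma wallisRatio_succ_mul (k : ℕ) :
    wallisRatio (k + 1) * (2 * k + 3) = wallisRatio k * (2 * k + 2) := by
  rw [wallisRatio_succ]; field_simp

lemma wallisRatio_sub_succ (k : ℕ) :
    wallisRatio k - wallisRatio (k + 1) = wallisRatio k / (2 * k + 3) := by
  rw [wallisRatio_succ]; field_simp; ring

lemma wallisRatio_antitone : Antitone wallisRatio := by
  refine antitone_nat_of_succ_le fun k => sub_nonneg.1 ?_
  rw [wallisRatio_sub_succ]
  exact (div_pos (wallisRatio_pos k) (by positivity)).le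

lemma wallisRatio_le_one (k : ℕ) : wallisRatio k ≤ 1 :=
  wallisRatio_zero ▸ wallisRatio_antitone k.zero_le

lemma wallisRatio_eq (k : ℕ) :
    wallisRatio k = 2 ^ (2 * k) * (k ! : ℝ) ^ 2 / (2 * k + 1)! := by
  have hsq : (2 : ℝ) ^ (2 * k) * (k ! : ℝ) ^ 2 = ((2 * k)‼ : ℝ) ^ 2 := by
    rw [Nat.doubleFactorial_two_mul]; push_cast; ring
  have : ((2 * k)‼ : ℝ) ≠ 0 := by positivity
  rw [hsq, Nat.factorial_eq_mul_doubleFactorial, wallisRatio]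
  push_cast
  field_simp

lemma summable_wallisRatio_div : Summable fun k : ℕ => wallisRatio k / (k + 1) := by
  have htel : Summable fun k => wallisRatio k - wallisRatio (k + 1) := by
    refine summable_of_sum_range_le (c := 1)
      (fun k => sub_nonneg.2 (wallisRatio_antitone k.le_succ)) fun n => ?_
    rw [Finset.sum_range_sub', wallisRatio_zero]
    linarith [wallisRatio_pos n]
  refine .of_nonneg_of_le (fun k => (div_pos (wallisRatio_pos k) (by positivity)).le)
    (fun k => ?_) (htel.mul_left 3)
  rw [wallisRatio_sub_succ, div_le_iff₀ (by positivity)]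
  have := wallisRatio_pos k
  field_simp
  nlinarith

noncomputable def arcsinDivSqrtSeries (y : ℝ) : ℝ := ∑' k, wallisRatio k * y ^ (2 * k + 1)

noncomputable def arcsinSqSeries (y : ℝ) : ℝ :=
  ∑' k, wallisRatio k / (k + 1) * y ^ (2 * k + 2)

lemma abs_wallisRatio_le_one (k : ℕ) : |wallisRatio k| ≤ 1 := by
  rw [abs_of_pos (wallisRatio_pos k)]; exact wallisRatio_le_one k

lemma hasDerivAt_arcsinDivSqrtSeries {y : ℝ} (hy : |y| < 1) :
    HasDerivAt arcsinDivSqrtSeries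
      (∑' k, wallisRatio k * (2 * k + 1 : ℕ) * y ^ (2 * k)) y :=
  hasDerivAt_tsum_mul_pow_two_mul_add_one abs_wallisRatio_le_one 0 hy

lemma hasDerivAt_arcsinSqSeries {y : ℝ} (hy : |y| < 1) :
    HasDerivAt arcsinSqSeries (2 * arcsinDivSqrtSeries y) y := by
  have hc (k : ℕ) : |wallisRatio k / (k + 1)| ≤ 1 := by
    rw [abs_of_pos (div_pos (wallisRatio_pos k) (by positivity)), div_le_one (by positivity)]
    exact (wallisRatio_le_one k).trans (le_add_of_nonneg_left k.cast_nonneg)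
  refine (hasDerivAt_tsum_mul_pow_two_mul_add_one hc 1 hy).congr_deriv ?_
  rw [arcsinDivSqrtSeries, ← tsum_mul_left]
  congr 1 with k
  push_cast
  field_simp
  ring

lemma one_sub_sq_mul_deriv_arcsinDivSqrtSeries {y : ℝ} (hy : |y| < 1) :
    (1 - y ^ 2) * ∑' k, wallisRatio k * (2 * k + 1 : ℕ) * y ^ (2 * k) =
      1 + y * arcsinDivSqrtSeries y := by
  set h : ℕ → ℝ := fun k => wallisRatio k * (2 * k + 1 : ℕ) * y ^ (2 * k) with h_def
  have hbound (k : ℕ) : |wallisRatio k * (2 * k + 1 : ℕ)| ≤ 2 * k + 1 := by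
    rw [abs_of_pos (by have := wallisRatio_pos k; positivity)]
    push_cast
    nlinarith [wallisRatio_le_one k, wallisRatio_pos k]
  have hh : Summable h := summable_mul_pow_two_mul_add hbound hy 0
  have hG : Summable fun k => wallisRatio k * y ^ (2 * k + 1) :=
    summable_mul_pow_two_mul_add (a := 0) (by simpa using abs_wallisRatio_le_one) hy 1
  have hstep (k : ℕ) : h (k + 1) = y ^ 2 * h k + y * (wallisRatio k * y ^ (2 * k + 1)) := by
    have hrec := wallisRatio_succ_mul k
    simp only [h_def]
    push_cast
    linear_combination y ^ (2 * k + 2) * hrec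
  have hshift : ∑' k, h k = 1 + (y ^ 2 * ∑' k, h k + y * arcsinDivSqrtSeries y) := by
    nth_rw 1 [hh.tsum_eq_zero_add]
    rw [tsum_congr hstep, (hh.mul_left _).tsum_add (hG.mul_left _),
      tsum_mul_left, tsum_mul_left]
    rw [show h 0 = 1 by simp [h_def, wallisRatio_zero], arcsinDivSqrtSeries]
  linear_combination hshift

lemma sqrt_one_sub_sq_mul_arcsinDivSqrtSeries :
    EqOn (fun y => √(1 - y ^ 2) * arcsinDivSqrtSeries y) arcsin (Ioo (-1) 1) := by
  refine isOpen_Ioo.eqOn_of_hasDerivAt isPreconnected_Ioo (fun y hy => ?_)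
    (fun y hy => hasDerivAt_arcsin hy.1.ne' hy.2.ne) (x := 0) (by norm_num)
    (by simp [arcsinDivSqrtSeries])
  have hy1 : |y| < 1 := abs_lt.2 hy
  have hpos : 0 < 1 - y ^ 2 := by nlinarith [abs_nonneg y, sq_abs y]
  have hs : 0 < √(1 - y ^ 2) := sqrt_pos.2 hpos
  have hsqrt : HasDerivAt (fun y => √(1 - y ^ 2)) (-y / √(1 - y ^ 2)) y := by
    convert ((hasDerivAt_pow 2 y).const_sub 1).sqrt hpos.ne' using 1
    field_simp
    ring
  refine (hsqrt.mul (hasDerivAt_arcsinDivSqrtSeries hy1)).congr_deriv ?_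
  have hode := one_sub_sq_mul_deriv_arcsinDivSqrtSeries hy1
  rw [← sq_sqrt hpos.le] at hode
  field_simp
  linear_combination hode

lemma arcsin_sq_eqOn_arcsinSqSeries :
    EqOn (fun y => arcsin y ^ 2) arcsinSqSeries (Ioo (-1) 1) := by
  refine isOpen_Ioo.eqOn_of_hasDerivAt isPreconnected_Ioo (fun y hy => ?_)
    (fun y hy => hasDerivAt_arcsinSqSeries (abs_lt.2 hy)) (x := 0) (by norm_num)
    (by simp [arcsinSqSeries])
  have hs : 0 < √(1 - y ^ 2) := sqrt_pos.2 (by nlinarith [hy.1, hy.2])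
  have hG : √(1 - y ^ 2) * arcsinDivSqrtSeries y = arcsin y :=
    sqrt_one_sub_sq_mul_arcsinDivSqrtSeries hy
  refine ((hasDerivAt_arcsin hy.1.ne' hy.2.ne).pow 2).congr_deriv ?_
  rw [← hG]
  field_simp
  ring

lemma continuousOn_arcsinSqSeries : ContinuousOn arcsinSqSeries (Icc (-1) 1) := by
  refine continuousOn_tsum (fun k => (continuous_const.mul (continuous_pow _)).continuousOn)
    summable_wallisRatio_div fun k y hy => ?_
  have hc : 0 ≤ wallisRatio k / (k + 1) := div_nonneg (wallisRatio_pos k).le (by positivity)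
  rw [norm_mul, Real.norm_of_nonneg hc, norm_pow]
  exact mul_le_of_le_one_right hc (pow_le_one₀ (norm_nonneg y) (abs_le.2 hy))
  
lemma arcsin_sq_eq_arcsinSqSeries {y : ℝ} (hy : |y| ≤ 1) : arcsin y ^ 2 = arcsinSqSeries y :=
  arcsin_sq_eqOn_arcsinSqSeries.of_subset_closure (continuous_arcsin.pow 2).continuousOn
    continuousOn_arcsinSqSeries Ioo_subset_Icc_self
    (by rw [closure_Ioo (by norm_num)]) (abs_le.1 hy)

theorem arcsin_sq_series (x : ℝ) (hx : x ^ 2 ≤ 1) :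
    Real.arcsin x ^ 2 = ∑' k : ℕ,
      2 ^ (2 * k) * (Nat.factorial k : ℝ) ^ 2 * x ^ (2 * k + 2) /
        ((Nat.factorial (2 * k + 1) : ℝ) * ((k : ℝ) + 1)) := by
  rw [arcsin_sq_eq_arcsinSqSeries ((sq_le_one_iff_abs_le_one x).1 hx), arcsinSqSeries]
  congr 1 with k
  rw [wallisRatio_eq]
  field_simp
end

section
/- For every real number x with x² ≤ 1, (arcsin x)² = (1/2) · Σ_{n=1}^∞ (2x)^{2n} / (n² · C(2n, n)), where arcsin denotes the real inverse sine function and C(2n, n) denotes the central binomial coefficient. -/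
/-!
The derivative of `arcsin² t` is `2 arcsin t / √(1 - t²)`. Writing `4ᵐ / ((2m+1) C(2m,m))` as half
the Wallis integral `∫₀^π sin^(2m+1) θ dθ` and summing the geometric series under the integral
gives `arcsin t / √(1 - t²) = ∑ 4ᵐ t^(2m+1) / ((2m+1) C(2m,m))`, because
`∫₀^π t sin θ / (1 - t² sin² θ) dθ = 2 arcsin t / √(1 - t²)`. Integrating this series of
nonnegative terms from `0` to `x` (monotone convergence, which also covers `x = 1`) gives the
claim for `x ≥ 0`; both sides are even in `x`.
-/

open Real MeasureTheory Set Nat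

theorem hasSum_pow_two_mul_add_one {y : ℝ} (hy : |y| < 1) :
    HasSum (fun k : ℕ => y ^ (2 * k + 1)) (y / (1 - y ^ 2)) := by
  have hy2 : |y ^ 2| < 1 := by rw [abs_pow]; exact pow_lt_one₀ (abs_nonneg y) hy two_ne_zero
  rw [div_eq_mul_inv]
  exact ((hasSum_geometric_of_abs_lt_one hy2).mul_left y).congr_fun fun k => by ring

theorem integral_sin_pow_odd_eq_centralBinom (m : ℕ) :
    ∫ θ in (0)..π, sin θ ^ (2 * m + 1) = 2 * 4 ^ m / ((2 * m + 1) * centralBinom m) := by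
  induction m with
  | zero => norm_num
  | succ m ih =>
    have hrec : ((m : ℝ) + 1) * centralBinom (m + 1) = 2 * (2 * m + 1) * centralBinom m := by
      exact_mod_cast succ_mul_centralBinom_succ m
    have hpos : (0 : ℝ) < centralBinom m := by exact_mod_cast centralBinom_pos m
    have hpos' : (0 : ℝ) < centralBinom (m + 1) := by exact_mod_cast centralBinom_pos (m + 1)
    rw [show 2 * (m + 1) + 1 = 2 * m + 1 + 2 by ring, integral_sin_pow, ih]
    simp only [sin_zero, sin_pi, zero_pow (succ_ne_zero _), zero_mul, sub_zero, zero_div, zero_add]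
    push_cast
    field_simp
    linear_combination (2 * 4 ^ m * (2 * m + 3) : ℝ) * hrec

theorem integral_mul_sin_div_one_sub_sq {t : ℝ} (ht : |t| < 1) :
    ∫ θ in (0)..π, t * sin θ / (1 - (t * sin θ) ^ 2) = 2 * arcsin t / √(1 - t ^ 2) := by
  have ht2 : t ^ 2 < 1 := by rwa [sq_lt_one_iff_abs_lt_one]
  set s := √(1 - t ^ 2)
  have hs : 0 < s := sqrt_pos.2 (by linarith)
  have hs2 : s ^ 2 = 1 - t ^ 2 := sq_sqrt (by linarith)
  have hden (θ : ℝ) : s ^ 2 + (t * cos θ) ^ 2 = 1 - (t * sin θ) ^ 2 := by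
    linear_combination hs2 + t ^ 2 * sin_sq_add_cos_sq θ
  have hden_pos (θ : ℝ) : 0 < 1 - (t * sin θ) ^ 2 := by rw [← hden]; positivity
  -- the substitution `u = t cos θ` turns the integrand into `1 / (s² + u²)`
  have hderiv (θ : ℝ) : HasDerivAt (fun θ => -(arctan (t * cos θ / s) / s))
      (t * sin θ / (1 - (t * sin θ) ^ 2)) θ := by
    refine ((((hasDerivAt_cos θ).const_mul t).div_const s).arctan.div_const s).neg.congr_deriv ?_
    rw [← hden]
    field_simp
  have hcont : Continuous fun θ => t * sin θ / (1 - (t * sin θ) ^ 2) :=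
    by fun_prop (disch := exact fun θ => (hden_pos θ).ne')
  rw [intervalIntegral.integral_eq_sub_of_hasDerivAt (fun θ _ => hderiv θ)
    (hcont.intervalIntegrable _ _), arcsin_eq_arctan (by rwa [mem_Ioo, ← abs_lt])]
  simp only [cos_pi, cos_zero, mul_neg, mul_one, neg_div, arctan_neg]
  ring

theorem hasSum_arcsin_div_sqrt_one_sub_sq {t : ℝ} (ht : |t| < 1) :
    HasSum (fun m : ℕ => 4 ^ m / ((2 * m + 1) * centralBinom m) * t ^ (2 * m + 1))
      (arcsin t / √(1 - t ^ 2)) := by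
  have habs (θ : ℝ) : |t * sin θ| ≤ |t| := by
    rw [abs_mul]; exact mul_le_of_le_one_right (abs_nonneg t) (abs_sin_le_one θ)
  have hswap : HasSum (fun m : ℕ => ∫ θ in (0)..π, (t * sin θ) ^ (2 * m + 1))
      (∫ θ in (0)..π, t * sin θ / (1 - (t * sin θ) ^ 2)) :=
    intervalIntegral.hasSum_integral_of_dominated_convergence (fun m _ => |t| ^ (2 * m + 1))
      (fun m => by fun_prop)
      (fun m => .of_forall fun θ _ => by
        rw [norm_pow, norm_eq_abs]; exact pow_le_pow_left₀ (abs_nonneg _) (habs θ) _)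
      (.of_forall fun _ _ => (hasSum_pow_two_mul_add_one (by rwa [abs_abs])).summable)
      intervalIntegrable_const
      (.of_forall fun θ _ => hasSum_pow_two_mul_add_one ((habs θ).trans_lt ht))
  rw [integral_mul_sin_div_one_sub_sq ht] at hswap
  simp only [mul_pow, intervalIntegral.integral_const_mul,
    integral_sin_pow_odd_eq_centralBinom] at hswap
  rw [← hasSum_mul_left_iff two_ne_zero, ← mul_div_assoc]
  exact hswap.congr_fun fun m => by ring

theorem hasSum_integral_of_nonneg {α ι : Type*} [MeasurableSpace α] {μ : Measure α} [Countable ι]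
    {F : ι → α → ℝ} {f : α → ℝ} (hF_meas : ∀ n, AEStronglyMeasurable (F n) μ)
    (hF_nonneg : ∀ n, 0 ≤ᵐ[μ] F n) (hf : Integrable f μ)
    (h_lim : ∀ᵐ a ∂μ, HasSum (fun n => F n a) (f a)) :
    HasSum (fun n => ∫ a, F n a ∂μ) (∫ a, f a ∂μ) :=
  hasSum_integral_of_dominated_convergence F hF_meas
    (fun n => (hF_nonneg n).mono fun _ ha => (norm_of_nonneg ha).le)
    (h_lim.mono fun _ ha => ha.summable)
    (hf.congr (h_lim.mono fun _ ha => ha.tsum_eq.symm)) h_lim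

theorem hasSum_arcsin_sq_of_nonneg {x : ℝ} (h0 : 0 ≤ x) (h1 : x ≤ 1) :
    HasSum (fun m : ℕ => 4 ^ m / ((2 * m + 1) * centralBinom m) * x ^ (2 * (m + 1)) / (m + 1))
      (arcsin x ^ 2) := by
  have hderiv : ∀ t ∈ Ioo 0 x,
      HasDerivAt (fun t => arcsin t ^ 2) (2 * (arcsin t / √(1 - t ^ 2))) t := fun t ht =>
    ((hasDerivAt_arcsin (by linarith [ht.1]) (by linarith [ht.2])).pow 2).congr_deriv
      (by ring)
  have hcont : ContinuousOn (fun t => arcsin t ^ 2) (Icc 0 x) := by fun_prop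
  have hint : IntegrableOn (fun t => 2 * (arcsin t / √(1 - t ^ 2))) (Ioc 0 x) :=
    intervalIntegral.integrableOn_deriv_of_nonneg hcont hderiv fun t ht =>
      have := arcsin_nonneg.2 ht.1.le
      by positivity
  have hFTC : ∫ t in (0)..x, 2 * (arcsin t / √(1 - t ^ 2)) = arcsin x ^ 2 := by
    rw [intervalIntegral.integral_eq_sub_of_hasDerivAt_of_le h0 hcont hderiv
      ((intervalIntegrable_iff_integrableOn_Ioc_of_le h0).2 hint)]
    simp
  have hterm (m : ℕ) :
      ∫ t in (0)..x, 2 * (4 ^ m / ((2 * m + 1) * centralBinom m) * t ^ (2 * m + 1))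
        = 4 ^ m / ((2 * m + 1) * centralBinom m) * x ^ (2 * (m + 1)) / (m + 1) := by
    have := centralBinom_pos m
    simp only [intervalIntegral.integral_const_mul, integral_pow]
    push_cast
    field_simp
    ring
  -- on `Ioo 0 x` the series converges at every point, also when `x = 1`
  have hswap := hasSum_integral_of_nonneg (μ := volume.restrict (Ioo 0 x))
    (F := fun m t => 2 * (4 ^ m / ((2 * m + 1) * centralBinom m) * t ^ (2 * m + 1)))
    (f := fun t => 2 * (arcsin t / √(1 - t ^ 2)))
    (fun m => by fun_prop)
    (fun m => ae_restrict_of_forall_mem measurableSet_Ioo fun t ht => by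
      have := ht.1.le
      positivity)
    (hint.mono_set Ioo_subset_Ioc_self)
    (ae_restrict_of_forall_mem measurableSet_Ioo fun t ht =>
      (hasSum_arcsin_div_sqrt_one_sub_sq
        (abs_lt.2 ⟨by linarith [ht.1], by linarith [ht.2]⟩)).mul_left 2)
  simpa only [← integral_Ioc_eq_integral_Ioo, ← intervalIntegral.integral_of_le h0, hterm,
    hFTC] using hswap

theorem hasSum_arcsin_sq {x : ℝ} (hx : |x| ≤ 1) :
    HasSum (fun m : ℕ => 4 ^ m / ((2 * m + 1) * centralBinom m) * x ^ (2 * (m + 1)) / (m + 1))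
      (arcsin x ^ 2) := by
  rcases le_total 0 x with h | h
  · exact hasSum_arcsin_sq_of_nonneg h (abs_le.1 hx).2
  · simpa only [pow_mul, neg_sq, arcsin_neg, even_two, Even.neg_pow] using
      hasSum_arcsin_sq_of_nonneg (neg_nonneg.2 h) (neg_le.1 (abs_le.1 hx).1)

theorem half_mul_two_mul_pow_div_choose_eq (x : ℝ) (m : ℕ) :
    1 / 2 * ((2 * x) ^ (2 * (m + 1)) / (((m : ℝ) + 1) ^ 2 * ((2 * (m + 1)).choose (m + 1) : ℝ)))
      = 4 ^ m / ((2 * m + 1) * centralBinom m) * x ^ (2 * (m + 1)) / (m + 1) := by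
  have hrec : ((m : ℝ) + 1) * centralBinom (m + 1) = 2 * (2 * m + 1) * centralBinom m := by
    exact_mod_cast succ_mul_centralBinom_succ m
  have hpos : (0 : ℝ) < centralBinom m := by exact_mod_cast centralBinom_pos m
  have hpos' : (0 : ℝ) < centralBinom (m + 1) := by exact_mod_cast centralBinom_pos (m + 1)
  rw [← centralBinom_eq_two_mul_choose, mul_pow, pow_mul 2, pow_succ,
    show (2 : ℝ) ^ 2 = 4 by norm_num]
  field_simp
  linear_combination (-2 * x ^ (2 * (m + 1))) * hrec

theorem arcsin_sq_central_binom_series (x : ℝ) (hx : x ^ 2 ≤ 1) :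
    Real.arcsin x ^ 2 = (1 / 2) * ∑' m : ℕ,
      (2 * x) ^ (2 * (m + 1)) /
        (((m : ℝ) + 1) ^ 2 * ((2 * (m + 1)).choose (m + 1) : ℝ)) := by
  rw [← tsum_mul_left, tsum_congr (half_mul_two_mul_pow_div_choose_eq x)]
  exact (hasSum_arcsin_sq ((sq_le_one_iff_abs_le_one x).1 hx)).tsum_eq.symm
end

section
/- Let Ei denote the exponential integral, defined for z > 0 by Ei(z) = γ + ln(z) + Σ_{k=1}^∞ z^k / (k · k!), where γ is the Euler–Mascheroni constant. For every natural number n, the function F(x) = Σ_{k=0}^n C(n, k) · Ei((k+1) · ln(x+1)) · (−1)^{k+n} satisfies F'(x) = x^n / ln(x+1) for all x > 0, where C(n,k) denotes the binomial coefficient. -/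
open Real

/-- The exponential integral for positive arguments:
`Ei(z) = γ + log z + Σ_{k=1}^∞ z^k/(k·k!)`. -/
noncomputable def Ei (z : ℝ) : ℝ :=
  Real.eulerMascheroniConstant + Real.log z +
    ∑' k : ℕ, z ^ (k + 1) / (((k : ℝ) + 1) * (Nat.factorial (k + 1) : ℝ))

/-! Differentiating the series termwise gives `Ei' z = 1 / z + (exp z - 1) / z = exp z / z`, so by
the chain rule `Ei ((k + 1) log (x + 1))` has derivative `(x + 1) ^ k / log (x + 1)`. The signed
binomial sum of these derivatives is `((x + 1) - 1) ^ n / log (x + 1) = x ^ n / log (x + 1)`. -/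

open Finset
open scoped Nat

lemma summable_pow_div_factorial_succ (x : ℝ) :
    Summable fun k : ℕ => x ^ k / ((k + 1)! : ℝ) := by
  refine (Real.summable_pow_div_factorial |x|).of_norm_bounded fun k => ?_
  rw [norm_div, norm_pow, Real.norm_eq_abs, Real.norm_eq_abs, Nat.abs_cast]
  gcongr
  exact Nat.le_succ k

lemma hasSum_pow_div_factorial_succ {z : ℝ} (hz : z ≠ 0) :
    HasSum (fun k : ℕ => z ^ k / ((k + 1)! : ℝ)) ((exp z - 1) / z) := by
  have hexp : HasSum (fun k : ℕ => z ^ (k + 1) / ((k + 1)! : ℝ)) (exp z - 1) := by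
    simpa [exp_eq_exp_ℝ] using
      (hasSum_nat_add_iff' 1).mpr (NormedSpace.expSeries_div_hasSum_exp z)
  have hterm : ∀ k : ℕ, z ^ k / ((k + 1)! : ℝ) = z ^ (k + 1) / ((k + 1)! : ℝ) / z := fun k => by
    rw [pow_succ, mul_div_right_comm, mul_div_cancel_right₀ _ hz]
  simpa only [hterm] using hexp.div_const z

lemma hasDerivAt_tsum_pow_succ_div (z : ℝ) :
    HasDerivAt (fun y : ℝ => ∑' k : ℕ, y ^ (k + 1) / (((k : ℝ) + 1) * ((k + 1)! : ℝ)))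
      (∑' k : ℕ, z ^ k / ((k + 1)! : ℝ)) z := by
  -- the termwise derivatives are dominated by `R ^ k / (k + 1)!` on `(-R, R)`
  set R : ℝ := |z| + 1
  refine hasDerivAt_tsum_of_isPreconnected (g' := fun k y => y ^ k / ((k + 1)! : ℝ))
    (summable_pow_div_factorial_succ R) (isOpen_Ioo (a := -R) (b := R))
    isPreconnected_Ioo (fun k y _ => ?_) (fun k y hy => ?_) (y₀ := (0 : ℝ)) ?_ ?_ ?_
  · have hk : (k : ℝ) + 1 ≠ 0 := by positivity
    refine ((hasDerivAt_pow (k + 1) y).div_const (((k : ℝ) + 1) * ((k + 1)! : ℝ))).congr_deriv ?_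
    push_cast
    field_simp
  · have hyR : |y| ≤ R := abs_le.mpr ⟨hy.1.le, hy.2.le⟩
    rw [Real.norm_eq_abs, abs_div, abs_pow, Nat.abs_cast]
    gcongr
  · exact ⟨by linarith [abs_nonneg z], by positivity⟩
  · simp
  · exact ⟨by linarith [neg_abs_le z], by linarith [le_abs_self z]⟩

lemma hasDerivAt_Ei {z : ℝ} (hz : 0 < z) : HasDerivAt Ei (exp z / z) z := by
  have hseries := hasDerivAt_tsum_pow_succ_div z
  rw [(hasSum_pow_div_factorial_succ hz.ne').tsum_eq] at hseries
  refine (((hasDerivAt_log hz.ne').const_add eulerMascheroniConstant).add hseries).congr_deriv ?_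
  field_simp
  ring

lemma hasDerivAt_Ei_mul_log (k : ℕ) {x : ℝ} (hx : 1 < x) :
    HasDerivAt (fun x => Ei (((k : ℝ) + 1) * log x)) (x ^ k / log x) x := by
  have hx0 : 0 < x := by linarith
  have hlog : 0 < log x := log_pos hx
  have hEi := (hasDerivAt_Ei (by positivity)).comp x
    ((hasDerivAt_log hx0.ne').const_mul ((k : ℝ) + 1))
  have hpow : exp (((k : ℝ) + 1) * log x) = x ^ (k + 1) := by
    rw [mul_comm, exp_mul, exp_log hx0]
    norm_cast
  refine hEi.congr_deriv ?_
  rw [hpow]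
  field_simp
  ring

theorem hasDerivAt_antiderivative_pow_div_log (n : ℕ) :
    ∀ x : ℝ, 0 < x →
      HasDerivAt (fun x : ℝ =>
          ∑ k ∈ Finset.range (n + 1),
            (n.choose k : ℝ) * Ei (((k : ℝ) + 1) * Real.log (x + 1)) * (-1) ^ (k + n))
        (x ^ n / Real.log (x + 1)) x := by
  intro x hx
  have hterm : ∀ k ∈ range (n + 1),
      HasDerivAt (fun x : ℝ => (n.choose k : ℝ) * Ei (((k : ℝ) + 1) * log (x + 1)) * (-1) ^ (k + n))
        ((n.choose k : ℝ) * ((x + 1) ^ k / log (x + 1)) * (-1) ^ (k + n)) x := fun k _ =>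
    (((hasDerivAt_Ei_mul_log k (by linarith)).comp_add_const x 1).const_mul _).mul_const _
  refine (HasDerivAt.fun_sum hterm).congr_deriv ?_
  have hbinom : x ^ n = ∑ k ∈ range (n + 1), (-1) ^ (k + n) * (x + 1) ^ k * (n.choose k : ℝ) := by
    simpa using sub_pow (x + 1) 1 n
  rw [hbinom, sum_div]
  exact sum_congr rfl fun k _ => by ring
end
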